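/- arXiv:physics/0301009 — 6 statements merged into one kernel-verified Lean document; each statement's English description precedes it below -/
import Mathlib

section
/- If f : ℝ → ℝ is twice differentiable with f'' eventually positive, and (d/dx)(1/f''(x)) → 0 as x → +∞, then x·f''(x) → +∞ as x → +∞. In particular 1/(x·f''(x)) → 0. -/
open Filter Asymptotics Topology

/-- By the mean value theorem, once `|h'| ≤ c/2` on `[B, ∞)` we get
`|h x| ≤ |h B| + c/2 · x` there, and `|h B| ≤ c/2 · x` for large `x`. -/
lemma isLittleO_id_of_tendsto_deriv_zero {h : ℝ → ℝ}
    (hdiff : ∀ᶠ x in atTop, DifferentiableAt ℝ h x)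
    (hderiv : Tendsto (deriv h) atTop (𝓝 0)) :
    h =o[atTop] id := by
  rw [isLittleO_iff]
  intro c hc
  have hsmall : ∀ᶠ x in atTop, ‖deriv h x‖ < c / 2 :=
    NormedAddGroup.tendsto_nhds_zero.1 hderiv (c / 2) (half_pos hc)
  obtain ⟨B, hB⟩ := eventually_atTop.1 ((hdiff.and hsmall).and (eventually_ge_atTop 0))
  have hB0 : 0 ≤ B := (hB B le_rfl).2
  have hgrowth : ∀ x ≥ B, ‖h x - h B‖ ≤ c / 2 * (x - B) := fun x hx => by
    simpa [Real.norm_eq_abs, abs_of_nonneg (sub_nonneg.2 hx)] using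
      Convex.norm_image_sub_le_of_norm_deriv_le (fun y hy => (hB y hy.1).1.1)
        (fun y hy => (hB y hy.1).1.2.le) (convex_Icc B x) (Set.left_mem_Icc.2 hx)
        (Set.right_mem_Icc.2 hx)
  filter_upwards [eventually_ge_atTop B, eventually_ge_atTop (2 * ‖h B‖ / c)] with x hxB hxhB
  have hhB : ‖h B‖ ≤ c / 2 * x := by
    rw [div_le_iff₀ hc] at hxhB
    linarith
  calc ‖h x‖ ≤ ‖h B‖ + ‖h x - h B‖ := norm_le_norm_add_norm_sub' (h x) (h B)
    _ ≤ c / 2 * x + c / 2 * (x - B) := add_le_add hhB (hgrowth x hxB)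
    _ ≤ c * ‖id x‖ := by
      rw [id, Real.norm_of_nonneg (hB0.trans hxB)]
      nlinarith

theorem stmt_0_general (f : ℝ → ℝ)
    (hf3 : ∀ x, DifferentiableAt ℝ (deriv (deriv f)) x)
    (hpos : ∀ᶠ x in atTop, 0 < deriv (deriv f) x)
    (hlim : Tendsto (deriv fun x => (deriv (deriv f) x)⁻¹) atTop (nhds 0)) :
    Tendsto (fun x => x * deriv (deriv f) x) atTop atTop ∧
    Tendsto (fun x => (x * deriv (deriv f) x)⁻¹) atTop (nhds 0) := by
  set g := deriv (deriv f)
  have hinv_diff : ∀ᶠ x in atTop, DifferentiableAt ℝ (fun y => (g y)⁻¹) x :=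
    hpos.mono fun x hx => (hf3 x).inv hx.ne'
  have hinv_zero : Tendsto (fun x => (x * g x)⁻¹) atTop (𝓝 0) := by
    simpa [mul_inv, div_eq_mul_inv, mul_comm] using
      (isLittleO_id_of_tendsto_deriv_zero hinv_diff hlim).tendsto_div_nhds_zero
  have hinv_pos : ∀ᶠ x in atTop, 0 < (x * g x)⁻¹ := by
    filter_upwards [hpos, eventually_gt_atTop 0] with x hgx hx
    positivity
  refine ⟨?_, hinv_zero⟩
  simpa only [Pi.inv_def, inv_inv] using
    (tendsto_nhdsWithin_iff.2 ⟨hinv_zero, hinv_pos⟩).inv_tendsto_nhdsGT_zero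

/-- If `f` is twice differentiable with `f''` eventually positive and the derivative of
`1/f''` tends to `0` at `+∞`, then `x * f''(x) → +∞`, and in particular
`1/(x * f''(x)) → 0`. -/
theorem stmt_0 (f : ℝ → ℝ)
    (hf2 : ∀ x, DifferentiableAt ℝ (deriv f) x)
    (hf3 : ∀ x, DifferentiableAt ℝ (deriv (deriv f)) x)
    (hpos : ∀ᶠ x in atTop, 0 < deriv (deriv f) x)
    (hlim : Tendsto (deriv fun x => (deriv (deriv f) x)⁻¹) atTop (nhds 0)) :
    Tendsto (fun x => x * deriv (deriv f) x) atTop atTop ∧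
    Tendsto (fun x => (x * deriv (deriv f) x)⁻¹) atTop (nhds 0) :=
  stmt_0_general f hf3 hpos hlim
end

section
/- Let g : ℝ → ℝ be positive, eventually monotone, and regularly varying at +∞ with index ν, and let f'' be positive with x·f''(x) → +∞. Then for any constant C > 0, g(x+h)/g(x) → 1 as x → +∞, uniformly over all h with |h| ≤ C/f''(x). -/
/-!
Since `x f''(x) → ∞`, for every `d > 0` eventually `|h| ≤ C / f''(x) ≤ d x`, so `x + h` lies in
`[(1 - d) x, (1 + d) x]`. By eventual monotonicity `g (x + h) / g x` is squeezed between
`g ((1 - d) x) / g x` and `g ((1 + d) x) / g x`, whose limits `(1 ∓ d) ^ ν` are as close to `1`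
as we like once `d` is small.
-/

open Filter Set Metric Topology

theorem mem_uIcc_of_monotoneOn_or_antitoneOn {g : ℝ → ℝ} {A a b y : ℝ}
    (hg : MonotoneOn g (Ici A) ∨ AntitoneOn g (Ici A)) (ha : A ≤ a) (hy : y ∈ uIcc a b)
    (hab : a ≤ b) : g y ∈ uIcc (g a) (g b) := by
  have hsub : uIcc a b ⊆ Ici A := by
    rw [uIcc_of_le hab]
    exact fun z hz => ha.trans hz.1
  rcases hg with hmono | hanti
  · exact (hmono.mono hsub).mapsTo_uIcc hy
  · exact (hanti.mono hsub).mapsTo_uIcc hy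

theorem exists_ratio_mem_ball_of_regularlyVarying {g : ℝ → ℝ} {ν ε : ℝ}
    (hrv : ∀ l : ℝ, 0 < l → Tendsto (fun x => g (l * x) / g x) atTop (𝓝 (l ^ ν)))
    (hε : 0 < ε) :
    ∃ d, 0 < d ∧ d < 1 ∧ ∀ᶠ x in atTop,
      g ((1 - d) * x) / g x ∈ ball 1 ε ∧ g ((1 + d) * x) / g x ∈ ball 1 ε := by
  have hpow : ∀ᶠ l in 𝓝 (1 : ℝ), l ^ ν ∈ ball 1 ε := by
    refine (Real.continuousAt_rpow_const 1 ν (Or.inl one_ne_zero)).eventually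
      (isOpen_ball.mem_nhds ?_)
    simpa using hε
  obtain ⟨δ, hδ, hball⟩ := Metric.eventually_nhds_iff.mp hpow
  set d := min (δ / 2) (1 / 2)
  have hd : 0 < d := lt_min (by linarith) (by norm_num)
  have hdδ : d < δ := (min_le_left _ _).trans_lt (by linarith)
  have hd1 : d < 1 := (min_le_right _ _).trans_lt (by norm_num)
  have hratio : ∀ l, 0 < l → dist l 1 < δ → ∀ᶠ x in atTop, g (l * x) / g x ∈ ball 1 ε :=
    fun l hl hlδ => (hrv l hl).eventually (isOpen_ball.mem_nhds (hball hlδ))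
  refine ⟨d, hd, hd1, (hratio _ (by linarith) ?_).and (hratio _ (by linarith) ?_)⟩ <;>
    simpa [Real.dist_eq, abs_of_pos hd] using hdδ

theorem exists_abs_div_sub_one_lt_of_regularlyVarying {g : ℝ → ℝ} {ν A ε : ℝ}
    (hmono : MonotoneOn g (Ici A) ∨ AntitoneOn g (Ici A))
    (hrv : ∀ l : ℝ, 0 < l → Tendsto (fun x => g (l * x) / g x) atTop (𝓝 (l ^ ν)))
    (hε : 0 < ε) :
    ∃ d > 0, ∀ᶠ x in atTop, ∀ y, |y - x| ≤ d * x → |g y / g x - 1| < ε := by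
  obtain ⟨d, hd, hd1, hratio⟩ := exists_ratio_mem_ball_of_regularlyVarying hrv hε
  refine ⟨d, hd, ?_⟩
  filter_upwards [hratio, eventually_ge_atTop (max 0 (A / (1 - d)))] with x ⟨hlo, hhi⟩ hx y hy
  have hx0 : 0 ≤ x := le_of_max_le_left hx
  have hAx : A ≤ (1 - d) * x := by
    rw [mul_comm, ← div_le_iff₀ (by linarith)]
    exact le_of_max_le_right hx
  rw [abs_le] at hy
  have hyx : y ∈ uIcc ((1 - d) * x) ((1 + d) * x) := by
    rw [uIcc_of_le (by nlinarith)]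
    constructor <;> linarith
  have hgy := mem_uIcc_of_monotoneOn_or_antitoneOn hmono hAx hyx (by nlinarith)
  have hdiv : g y / g x ∈ uIcc (g ((1 - d) * x) / g x) (g ((1 + d) * x) / g x) := by
    rw [← image_div_const_uIcc]
    exact mem_image_of_mem _ hgy
  simpa [Real.dist_eq] using (convex_ball 1 ε).ordConnected.uIcc_subset hlo hhi hdiv

theorem eventually_div_le_mul_of_tendsto_mul_atTop {φ : ℝ → ℝ}
    (hφ : Tendsto (fun x => x * φ x) atTop atTop) (C : ℝ) {d : ℝ} (hd : 0 < d) :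
    ∀ᶠ x in atTop, C / φ x ≤ d * x := by
  filter_upwards [hφ.eventually_ge_atTop (max (C / d) 1), eventually_ge_atTop 0] with x hx hx0
  have hφx : 0 < φ x := by
    by_contra! h
    have : x * φ x ≤ 0 := mul_nonpos_of_nonneg_of_nonpos hx0 h
    linarith [le_of_max_le_right hx]
  rw [div_le_iff₀ hφx, mul_assoc, ← div_le_iff₀' hd]
  exact le_of_max_le_left hx

theorem stmt_2_general (g f : ℝ → ℝ) (ν : ℝ)
    (hgmono : ∃ A : ℝ, MonotoneOn g (Set.Ici A) ∨ AntitoneOn g (Set.Ici A))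
    (hgrv : ∀ l : ℝ, 0 < l →
      Tendsto (fun x => g (l * x) / g x) atTop (nhds (l ^ ν)))
    (hxf : Tendsto (fun x => x * deriv (deriv f) x) atTop atTop)
    (C : ℝ) :
    ∀ ε > 0, ∀ᶠ x in atTop, ∀ h : ℝ,
      |h| ≤ C / deriv (deriv f) x → |g (x + h) / g x - 1| < ε := by
  intro ε hε
  obtain ⟨A, hA⟩ := hgmono
  obtain ⟨d, hd, hratio⟩ := exists_abs_div_sub_one_lt_of_regularlyVarying hA hgrv hε
  filter_upwards [hratio, eventually_div_le_mul_of_tendsto_mul_atTop hxf C hd]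
    with x hx hCx h hh
  exact hx (x + h) (by simpa using hh.trans hCx)

/-- If `g` is positive, eventually monotone and regularly varying at `+∞` with index `ν`,
and `f''` is eventually positive with `x * f''(x) → +∞`, then for any `C > 0`,
`g(x+h)/g(x) → 1` as `x → +∞`, uniformly over `|h| ≤ C / f''(x)`. -/
theorem stmt_2 (g f : ℝ → ℝ) (ν : ℝ)
    (hgpos : ∀ x, 0 < g x)
    (hgmono : ∃ A : ℝ, MonotoneOn g (Set.Ici A) ∨ AntitoneOn g (Set.Ici A))
    (hgrv : ∀ l : ℝ, 0 < l →
      Tendsto (fun x => g (l * x) / g x) atTop (nhds (l ^ ν)))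
    (hf2pos : ∀ᶠ x in atTop, 0 < deriv (deriv f) x)
    (hxf : Tendsto (fun x => x * deriv (deriv f) x) atTop atTop)
    (C : ℝ) (hC : 0 < C) :
    ∀ ε > 0, ∀ᶠ x in atTop, ∀ h : ℝ,
      |h| ≤ C / deriv (deriv f) x → |g (x + h) / g x - 1| < ε :=
  stmt_2_general g f ν hgmono hgrv hxf C
end

section
/- Let S = Σᵢ wᵢ Xᵢ be a weighted sum of comonotonic random variables X₁,…,X_N where each Xᵢ ∼ W(c, χᵢ) is a symmetric modified Weibull variable, all with the same exponent c, and wᵢ ≥ 0. Then S is exactly distributed as W(c, χ̂) with χ̂ = Σᵢ wᵢ χᵢ. -/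
open MeasureTheory ProbabilityTheory

/-- A weighted sum `S = ∑ wᵢXᵢ` of comonotonic symmetric modified Weibull variables
`Xᵢ ∼ W(c, χᵢ)` (all with the same exponent `c`, represented as monotone transforms
`Xᵢ = sgn(U)·χᵢ·(|U|/√2)^{2/c}` of a single standard normal `U`) is exactly distributed
as `W(c, χ̂)` with `χ̂ = ∑ wᵢχᵢ`: its Gaussianized transform is standard normal. -/
theorem stmt_6 {Ω : Type*} [MeasurableSpace Ω] (μ : Measure Ω) [IsProbabilityMeasure μ]
    (N : ℕ) (c : ℝ) (hc : 0 < c) (χ w : Fin N → ℝ)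
    (hχ : ∀ i, 0 < χ i) (hw : ∀ i, 0 ≤ w i) (hsum : 0 < ∑ i, w i * χ i)
    (U : Ω → ℝ) (hU : Measurable U) (hUlaw : μ.map U = gaussianReal 0 1)
    (X : Fin N → Ω → ℝ)
    (hX : ∀ i, X i = fun ω => Real.sign (U ω) * χ i * (|U ω| / Real.sqrt 2) ^ (2/c)) :
    μ.map (fun ω => Real.sign (∑ i, w i * X i ω) * Real.sqrt 2
        * (|∑ i, w i * X i ω| / ∑ i, w i * χ i) ^ (c/2))
      = gaussianReal 0 1 := by
  have key : (fun ω => Real.sign (∑ i, w i * X i ω) * Real.sqrt 2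
      * (|∑ i, w i * X i ω| / ∑ i, w i * χ i) ^ (c/2)) = U := by
    funext ω
    set a := U ω with ha
    set t : ℝ := (|a| / Real.sqrt 2) ^ (2/c) with ht
    have hS : (∑ i, w i * X i ω) = Real.sign a * t * ∑ i, w i * χ i := by
      rw [Finset.mul_sum]
      refine Finset.sum_congr rfl fun i _ => ?_
      rw [hX i]
      ring
    rcases lt_trichotomy a 0 with hlt | heq | hgt
    · have hsgn : Real.sign a = -1 := Real.sign_of_neg hlt
      have htpos : 0 < t :=
        Real.rpow_pos_of_pos (div_pos (abs_pos.mpr (ne_of_lt hlt)) (Real.sqrt_pos.mpr two_pos)) _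
      have hSneg : (∑ i, w i * X i ω) < 0 := by
        rw [hS, hsgn]
        nlinarith
      have hsgnS : Real.sign (∑ i, w i * X i ω) = -1 := Real.sign_of_neg hSneg
      have habs : |∑ i, w i * X i ω| = t * ∑ i, w i * χ i := by
        rw [abs_of_nonpos (le_of_lt hSneg), hS, hsgn]
        ring
      have hdiv : |∑ i, w i * X i ω| / ∑ i, w i * χ i = t := by
        rw [habs, mul_div_assoc, div_self (ne_of_gt hsum), mul_one]
      have htpow : t ^ (c/2) = |a| / Real.sqrt 2 := by
        rw [ht, ← Real.rpow_mul (by positivity)]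
        rw [show (2/c) * (c/2) = 1 by field_simp]
        exact Real.rpow_one _
      rw [hsgnS, hdiv, htpow, abs_of_neg hlt]
      have h2 : Real.sqrt 2 ≠ 0 := by positivity
      field_simp
    · have ht0 : t = 0 := by
        rw [ht, heq]
        simp [Real.zero_rpow (by positivity : (2:ℝ)/c ≠ 0)]
      have hS0 : (∑ i, w i * X i ω) = 0 := by rw [hS, ht0]; ring
      rw [hS0, Real.sign_zero, heq]
      ring
    · have hsgn : Real.sign a = 1 := Real.sign_of_pos hgt
      have htpos : 0 < t :=
        Real.rpow_pos_of_pos (div_pos (abs_pos.mpr (ne_of_gt hgt)) (Real.sqrt_pos.mpr two_pos)) _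
      have hSpos : 0 < (∑ i, w i * X i ω) := by
        rw [hS, hsgn]
        nlinarith
      have hsgnS : Real.sign (∑ i, w i * X i ω) = 1 := Real.sign_of_pos hSpos
      have habs : |∑ i, w i * X i ω| = t * ∑ i, w i * χ i := by
        rw [abs_of_pos hSpos, hS, hsgn]
        ring
      have hdiv : |∑ i, w i * X i ω| / ∑ i, w i * χ i = t := by
        rw [habs, mul_div_assoc, div_self (ne_of_gt hsum), mul_one]
      have htpow : t ^ (c/2) = |a| / Real.sqrt 2 := by
        rw [ht, ← Real.rpow_mul (by positivity)]
        rw [show (2/c) * (c/2) = 1 by field_simp]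
        exact Real.rpow_one _
      rw [hsgnS, hdiv, htpow, abs_of_pos hgt]
      have h2 : Real.sqrt 2 ≠ 0 := by positivity
      field_simp
  rw [key, hUlaw]
end

section
/- Minimizing χ̂(w) = (Σᵢ (wᵢχᵢ)^{c/(c−1)})^{(c−1)/c} with c>1, χᵢ>0, over weights wᵢ ≥ 0 with Σ wᵢ = 1 yields the unique minimizer wᵢ* = χᵢ^{−c}/Σⱼ χⱼ^{−c}, with minimal value χ̂* = (Σⱼ χⱼ^{−c})^{−1/c}. -/
/-!
With `p = c / (c - 1)` the conjugate exponent of `c`, the objective is `(∑ aᵢ ^ p) ^ (1 / p)` with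
`aᵢ = wᵢ χᵢ`, and `x ↦ x ^ p` is strictly convex. At `w*` the Lagrange condition holds:
`(w*ᵢ χᵢ) ^ (p - 1) χᵢ` does not depend on `i`. Summing the tangent line inequalities of `x ^ p`
at the points `w*ᵢ χᵢ` then shows that every other point of the simplex has a strictly larger
objective, and the minimal value is a direct computation with powers of `∑ χⱼ ^ (-c)`.
-/
open Real Finset

theorem rpow_add_mul_rpow_sub_one_mul_sub_lt {p a x : ℝ} (hp : 1 < p) (ha : 0 < a) (hx : 0 ≤ x)
    (hxa : x ≠ a) : a ^ p + p * a ^ (p - 1) * (x - a) < x ^ p := by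
  have hb := one_add_mul_self_lt_rpow_one_add (s := x / a - 1)
    (by linarith [div_nonneg hx ha.le]) (by rwa [sub_ne_zero, ne_eq, div_eq_one_iff_eq ha.ne']) hp
  rw [add_sub_cancel, div_rpow hx ha.le, lt_div_iff₀ (rpow_pos_of_pos ha p)] at hb
  have hap : a ^ p = a ^ (p - 1) * a := by rw [← rpow_add_one ha.ne', sub_add_cancel]
  calc a ^ p + p * a ^ (p - 1) * (x - a) = (1 + p * (x / a - 1)) * a ^ p := by
        rw [hap]; field_simp
    _ < x ^ p := hb

theorem rpow_add_mul_rpow_sub_one_mul_sub_le {p a x : ℝ} (hp : 1 < p) (ha : 0 < a) (hx : 0 ≤ x) :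
    a ^ p + p * a ^ (p - 1) * (x - a) ≤ x ^ p := by
  rcases eq_or_ne x a with rfl | hxa
  · simp
  · exact (rpow_add_mul_rpow_sub_one_mul_sub_lt hp ha hx hxa).le

/-- `hk` is the Lagrange condition: the gradient of `w ↦ ∑ (w i * χ i) ^ p` at `u` is constant. -/
theorem sum_mul_rpow_lt_of_stationary {ι : Type*} [Fintype ι] {p k : ℝ} {χ u w : ι → ℝ}
    (hp : 1 < p) (hχ : ∀ i, 0 < χ i) (hu : ∀ i, 0 < u i) (hw : ∀ i, 0 ≤ w i)
    (hsum : ∑ i, w i = ∑ i, u i) (hk : ∀ i, (u i * χ i) ^ (p - 1) * χ i = k) (hwu : w ≠ u) :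
    ∑ i, (u i * χ i) ^ p < ∑ i, (w i * χ i) ^ p := by
  obtain ⟨j, hj⟩ := Function.ne_iff.mp hwu
  have htangent : ∑ i, ((u i * χ i) ^ p + p * (u i * χ i) ^ (p - 1) * (w i * χ i - u i * χ i))
      = ∑ i, (u i * χ i) ^ p := by
    have hlin : ∀ i, p * (u i * χ i) ^ (p - 1) * (w i * χ i - u i * χ i) = p * k * (w i - u i) := by
      intro i; rw [← hk i]; ring
    simp only [hlin, sum_add_distrib, ← mul_sum, sum_sub_distrib, hsum, sub_self, mul_zero,
      add_zero]
  rw [← htangent]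
  refine sum_lt_sum (fun i _ => rpow_add_mul_rpow_sub_one_mul_sub_le hp
    (mul_pos (hu i) (hχ i)) (mul_nonneg (hw i) (hχ i).le)) ⟨j, mem_univ j, ?_⟩
  exact rpow_add_mul_rpow_sub_one_mul_sub_lt hp (mul_pos (hu j) (hχ j))
    (mul_nonneg (hw j) (hχ j).le) (fun h => hj (mul_right_cancel₀ (hχ j).ne' h))

noncomputable def optimalWeights {ι : Type*} [Fintype ι] (c : ℝ) (χ : ι → ℝ) : ι → ℝ :=
  fun i => χ i ^ (-c) / ∑ j, χ j ^ (-c)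

section OptimalWeights

variable {ι : Type*} [Fintype ι] {c : ℝ} {χ : ι → ℝ}

theorem sum_rpow_neg_pos [Nonempty ι] (hχ : ∀ i, 0 < χ i) : 0 < ∑ j, χ j ^ (-c) :=
  sum_pos (fun i _ => rpow_pos_of_pos (hχ i) _) univ_nonempty

theorem optimalWeights_pos [Nonempty ι] (hχ : ∀ i, 0 < χ i) (i : ι) :
    0 < optimalWeights c χ i :=
  div_pos (rpow_pos_of_pos (hχ i) _) (sum_rpow_neg_pos hχ)

theorem sum_optimalWeights [Nonempty ι] (hχ : ∀ i, 0 < χ i) : ∑ i, optimalWeights c χ i = 1 := by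
  simp only [optimalWeights, ← sum_div, div_self (sum_rpow_neg_pos hχ).ne']

theorem optimalWeights_mul_rpow (hχ : ∀ i, 0 < χ i) (i : ι) (r : ℝ) :
    (optimalWeights c χ i * χ i) ^ r = χ i ^ ((1 - c) * r) / (∑ j, χ j ^ (-c)) ^ r := by
  rw [optimalWeights, div_mul_eq_mul_div, ← rpow_add_one (hχ i).ne', neg_add_eq_sub,
    div_rpow (rpow_pos_of_pos (hχ i) _).le (sum_nonneg fun j _ => (rpow_pos_of_pos (hχ j) _).le),
    ← rpow_mul (hχ i).le]

theorem optimalWeights_mul_rpow_conj_sub_one_mul (hc : 1 < c) (hχ : ∀ i, 0 < χ i) (i : ι) :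
    (optimalWeights c χ i * χ i) ^ (c / (c - 1) - 1) * χ i
      = ((∑ j, χ j ^ (-c)) ^ (c / (c - 1) - 1))⁻¹ := by
  have hc1 : c - 1 ≠ 0 := by linarith
  have hexp : (1 - c) * (c / (c - 1) - 1) = -1 := by field_simp; ring
  rw [optimalWeights_mul_rpow hχ, hexp, rpow_neg_one, div_mul_eq_mul_div,
    inv_mul_cancel₀ (hχ i).ne', one_div]

theorem sum_optimalWeights_mul_rpow_conj [Nonempty ι] (hc : 1 < c) (hχ : ∀ i, 0 < χ i) :
    (∑ i, (optimalWeights c χ i * χ i) ^ (c / (c - 1))) ^ ((c - 1) / c)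
      = (∑ j, χ j ^ (-c)) ^ (-(1 : ℝ) / c) := by
  have hc1 : c - 1 ≠ 0 := by linarith
  have hc0 : c ≠ 0 := by linarith
  have hS := sum_rpow_neg_pos (c := c) hχ
  have hexp : (1 - c) * (c / (c - 1)) = -c := by field_simp; ring
  have hdiv : ∀ y : ℝ, (∑ j, χ j ^ (-c)) / (∑ j, χ j ^ (-c)) ^ y = (∑ j, χ j ^ (-c)) ^ (1 - y) :=
    fun y => by rw [rpow_sub hS, rpow_one]
  simp only [optimalWeights_mul_rpow hχ, hexp, ← sum_div, hdiv]
  rw [← rpow_mul hS.le]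
  congr 1
  field_simp
  ring

end OptimalWeights

/-- Minimizing `χ̂(w) = (∑ (wᵢχᵢ)^{c/(c-1)})^{(c-1)/c}` with `c > 1` over the simplex
yields the unique minimizer `wᵢ* = χᵢ^{-c} / ∑ χⱼ^{-c}`, with minimal value
`(∑ χⱼ^{-c})^{-1/c}`. -/
theorem stmt_12 (N : ℕ) (hN : 0 < N) (c : ℝ) (χ : Fin N → ℝ)
    (hc : 1 < c) (hχ : ∀ i, 0 < χ i) :
    let wstar : Fin N → ℝ := fun i => χ i ^ (-c) / ∑ j, χ j ^ (-c)
    (∀ i, 0 ≤ wstar i) ∧ (∑ i, wstar i = 1) ∧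
    ((∑ i, (wstar i * χ i) ^ (c/(c-1))) ^ ((c-1)/c)
      = (∑ j, χ j ^ (-c)) ^ (-(1 : ℝ)/c)) ∧
    (∀ w : Fin N → ℝ, (∀ i, 0 ≤ w i) → (∑ i, w i = 1) → w ≠ wstar →
      (∑ i, (wstar i * χ i) ^ (c/(c-1))) ^ ((c-1)/c)
        < (∑ i, (w i * χ i) ^ (c/(c-1))) ^ ((c-1)/c)) := by
  have : NeZero N := ⟨hN.ne'⟩
  have hp : 1 < c / (c - 1) := by rw [lt_div_iff₀ (by linarith)]; linarith
  refine ⟨fun i => (optimalWeights_pos hχ i).le, sum_optimalWeights hχ,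
    sum_optimalWeights_mul_rpow_conj hc hχ, fun w hw hw1 hwne => ?_⟩
  have hlt := sum_mul_rpow_lt_of_stationary hp hχ (optimalWeights_pos hχ) hw
    (hw1.trans (sum_optimalWeights hχ).symm) (optimalWeights_mul_rpow_conj_sub_one_mul hc hχ) hwne
  exact rpow_lt_rpow (sum_nonneg fun i _ => rpow_nonneg
    (mul_pos (optimalWeights_pos hχ i) (hχ i)).le _) hlt (div_pos (by linarith) (by linarith))
end

section
/- For a portfolio whose loss tail satisfies P(S < −x) ∼ λ₋ (1 − Φ(√2 (x/χ̂)^{c/2})) as x → ∞, the ratio of recurrence times of losses VaR = β·VaR* and VaR* satisfies ln(T/T₀) = (β^c − 1)(VaR*/χ̂)^c + O(ln β) as VaR*/χ̂ → ∞, where T = 1/P(S < −VaR) and T₀ = 1/P(S < −VaR*). -/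
/-!
Mills' bounds `u φ(u) / (1 + u²) ≤ 1 - Φ(u) ≤ φ(u) / u`, obtained by integrating the derivatives
of `-φ` and of `t φ(t) / (1 + t²)` over `(u, ∞)`, give `1 - Φ(u) ∼ φ(u) / u`. Hence
`P x ∼ λ φ(u x) / u x` with `u x = √2 (x/χ)^{c/2}`, and since `u(βx) = β^{c/2} u x` and
`(u x)² / 2 = (x/χ)^c`, the logarithm of this model tail turns `ln (P x / P (βx))` into
`(β^c - 1)(x/χ)^c + (c/2) ln β + o(1)`, whose remainder is eventually below `c ln β`.
-/

open Filter MeasureTheory ProbabilityTheory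

/-- Standard normal cumulative distribution function `Φ`. -/
noncomputable def stdNormalCdf (u : ℝ) : ℝ := (gaussianReal 0 1 (Set.Iic u)).toReal

open Real Set Asymptotics Topology

lemma gaussianPDFReal_zero_one (t : ℝ) :
    gaussianPDFReal 0 1 t = (√(2 * π))⁻¹ * exp (-t ^ 2 / 2) := by
  simp [gaussianPDFReal]

lemma hasDerivAt_gaussianPDFReal_zero_one (t : ℝ) :
    HasDerivAt (gaussianPDFReal 0 1) (-t * gaussianPDFReal 0 1 t) t := by
  have h : HasDerivAt (fun s : ℝ => -s ^ 2 / 2) (-t) t :=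
    ((hasDerivAt_pow 2 t).fun_neg.div_const 2).congr_deriv (by push_cast; ring)
  rw [funext gaussianPDFReal_zero_one]
  exact (h.exp.const_mul (√(2 * π))⁻¹).congr_deriv (by ring)

lemma continuous_gaussianPDFReal_zero_one : Continuous (gaussianPDFReal 0 1) :=
  continuous_iff_continuousAt.mpr fun t => (hasDerivAt_gaussianPDFReal_zero_one t).continuousAt

lemma tendsto_gaussianPDFReal_zero_one_atTop :
    Tendsto (gaussianPDFReal 0 1) atTop (𝓝 0) := by
  have h : Tendsto (fun t : ℝ => -t ^ 2 / 2) atTop atBot :=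
    (tendsto_neg_atTop_atBot.comp (tendsto_pow_atTop two_ne_zero)).atBot_div_const two_pos
  simpa [funext gaussianPDFReal_zero_one] using
    (tendsto_exp_atBot.comp h).const_mul (√(2 * π))⁻¹

lemma integrable_mul_gaussianPDFReal_zero_one :
    Integrable fun t => t * gaussianPDFReal 0 1 t := by
  refine ((integrable_mul_exp_neg_mul_sq (b := 1 / 2) (by norm_num)).const_mul
    (√(2 * π))⁻¹).congr (Eventually.of_forall fun t => ?_)
  simp only [gaussianPDFReal_zero_one]
  rw [show -(1 / 2) * t ^ 2 = -t ^ 2 / 2 by ring]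
  ring

lemma integral_Ioi_mul_gaussianPDFReal_zero_one (u : ℝ) :
    ∫ t in Ioi u, t * gaussianPDFReal 0 1 t = gaussianPDFReal 0 1 u := by
  have h := integral_Ioi_of_hasDerivAt_of_tendsto (f := fun s => -gaussianPDFReal 0 1 s) (a := u)
    continuous_gaussianPDFReal_zero_one.neg.continuousWithinAt
    (fun t _ => by simpa using (hasDerivAt_gaussianPDFReal_zero_one t).fun_neg)
    integrable_mul_gaussianPDFReal_zero_one.integrableOn
    (by simpa using tendsto_gaussianPDFReal_zero_one_atTop.neg)
  simpa using h

lemma one_sub_stdNormalCdf_eq_integral (u : ℝ) :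
    1 - stdNormalCdf u = ∫ t in Ioi u, gaussianPDFReal 0 1 t := by
  rw [stdNormalCdf, ← measureReal_def, ← probReal_compl_eq_one_sub measurableSet_Iic, compl_Iic,
    measureReal_def, gaussianReal_apply_eq_integral 0 one_ne_zero,
    ENNReal.toReal_ofReal
      (setIntegral_nonneg measurableSet_Ioi fun t _ => gaussianPDFReal_nonneg 0 1 t)]

lemma one_sub_stdNormalCdf_le {u : ℝ} (hu : 0 < u) :
    1 - stdNormalCdf u ≤ gaussianPDFReal 0 1 u / u := by
  rw [one_sub_stdNormalCdf_eq_integral, ← integral_Ioi_mul_gaussianPDFReal_zero_one,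
    ← integral_div]
  refine setIntegral_mono_on (integrable_gaussianPDFReal 0 1).integrableOn
    (integrable_mul_gaussianPDFReal_zero_one.integrableOn.div_const u) measurableSet_Ioi
    fun t ht => ?_
  rw [le_div_iff₀ hu, mul_comm]
  exact mul_le_mul_of_nonneg_right (le_of_lt ht) (gaussianPDFReal_nonneg 0 1 t)

lemma hasDerivAt_div_one_add_sq_mul_gaussianPDFReal (t : ℝ) :
    HasDerivAt (fun s => s / (1 + s ^ 2) * gaussianPDFReal 0 1 s)
      (2 * gaussianPDFReal 0 1 t / (1 + t ^ 2) ^ 2 - gaussianPDFReal 0 1 t) t := by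
  have h := ((hasDerivAt_id' t).div ((hasDerivAt_pow 2 t).const_add 1) (by positivity)).mul
    (hasDerivAt_gaussianPDFReal_zero_one t)
  refine h.congr_deriv ?_
  simp only [Pi.div_apply]
  field_simp
  ring

lemma tendsto_div_one_add_sq_mul_gaussianPDFReal_atTop :
    Tendsto (fun s => s / (1 + s ^ 2) * gaussianPDFReal 0 1 s) atTop (𝓝 0) := by
  refine isBoundedUnder_le_mul_tendsto_zero (isBoundedUnder_of ⟨1, fun t => ?_⟩)
    tendsto_gaussianPDFReal_zero_one_atTop
  rw [Function.comp_apply, norm_div, Real.norm_eq_abs, Real.norm_of_nonneg (by positivity)]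
  exact div_le_one_of_le₀ (by nlinarith [abs_nonneg t, sq_abs t]) (by positivity)

lemma integrable_gaussianPDFReal_div_one_add_sq_sq :
    Integrable fun t => 2 * gaussianPDFReal 0 1 t / (1 + t ^ 2) ^ 2 := by
  refine ((integrable_gaussianPDFReal 0 1).const_mul 2).mono
    ((continuous_gaussianPDFReal_zero_one.const_mul 2).div (by fun_prop)
      fun t => by positivity).aestronglyMeasurable
    (Eventually.of_forall fun t => ?_)
  have hφ := gaussianPDFReal_nonneg 0 1 t
  rw [Real.norm_of_nonneg (by positivity), Real.norm_of_nonneg (by positivity)]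
  exact div_le_self (by positivity) (one_le_pow₀ (by nlinarith))

lemma le_one_sub_stdNormalCdf (u : ℝ) :
    u / (1 + u ^ 2) * gaussianPDFReal 0 1 u ≤ 1 - stdNormalCdf u := by
  have hint := integrable_gaussianPDFReal_div_one_add_sq_sq.integrableOn (s := Ioi u)
  have hφ := (integrable_gaussianPDFReal 0 1).integrableOn (s := Ioi u)
  have hftc := integral_Ioi_of_hasDerivAt_of_tendsto
    (hasDerivAt_div_one_add_sq_mul_gaussianPDFReal u).continuousAt.continuousWithinAt
    (fun t _ => hasDerivAt_div_one_add_sq_mul_gaussianPDFReal t) (hint.sub hφ)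
    tendsto_div_one_add_sq_mul_gaussianPDFReal_atTop
  rw [integral_sub hint hφ, ← one_sub_stdNormalCdf_eq_integral] at hftc
  have : 0 ≤ ∫ t in Ioi u, 2 * gaussianPDFReal 0 1 t / (1 + t ^ 2) ^ 2 :=
    setIntegral_nonneg measurableSet_Ioi fun t _ => by
      have := gaussianPDFReal_nonneg 0 1 t
      positivity
  linarith

theorem isEquivalent_one_sub_stdNormalCdf :
    (fun u => 1 - stdNormalCdf u) ~[atTop] fun u => gaussianPDFReal 0 1 u / u := by
  have hlow : Tendsto (fun u : ℝ => 1 - (1 + u ^ 2)⁻¹) atTop (𝓝 1) := by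
    simpa using tendsto_const_nhds.sub (tendsto_inv_atTop_zero.comp
      (tendsto_atTop_add_const_left _ 1 (tendsto_pow_atTop (α := ℝ) two_ne_zero)))
  refine isEquivalent_of_tendsto_one (tendsto_of_tendsto_of_tendsto_of_le_of_le' hlow
    tendsto_const_nhds ?_ ?_)
  all_goals filter_upwards [eventually_gt_atTop 0] with u hu
  all_goals have hφ := gaussianPDFReal_pos 0 1 u one_ne_zero
  · rw [Pi.div_apply, le_div_iff₀ (by positivity)]
    refine le_of_eq_of_le ?_ (le_one_sub_stdNormalCdf u)
    field_simp
    ring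
  · exact div_le_one_of_le₀ (one_sub_stdNormalCdf_le hu) (by positivity)

lemma Asymptotics.IsEquivalent.tendsto_log_sub_log {α : Type*} {l : Filter α} {f g : α → ℝ}
    (h : f ~[l] g) (hg : ∀ᶠ x in l, g x ≠ 0) :
    Tendsto (fun x => Real.log (f x) - Real.log (g x)) l (𝓝 0) := by
  have hfg : Tendsto (f / g) l (𝓝 1) := (isEquivalent_iff_tendsto_one hg).mp h
  refine (by simpa using hfg.log one_ne_zero : Tendsto (fun x => Real.log ((f / g) x)) l (𝓝 0))
    |>.congr' ?_
  filter_upwards [hfg.eventually_ne one_ne_zero, hg] with x hfgx hgx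
  exact Real.log_div (div_ne_zero_iff.mp hfgx).1 hgx

lemma log_gaussianPDFReal_div_self {u : ℝ} (hu : 0 < u) :
    log (gaussianPDFReal 0 1 u / u) = -log √(2 * π) - u ^ 2 / 2 - log u := by
  rw [log_div (gaussianPDFReal_pos 0 1 u one_ne_zero).ne' hu.ne', gaussianPDFReal_zero_one,
    log_mul (by positivity) (exp_ne_zero _), log_exp, log_inv]
  ring

noncomputable def normalTailArg (c χ x : ℝ) : ℝ := √2 * (x / χ) ^ (c / 2)

noncomputable def millsTail (lam c χ x : ℝ) : ℝ :=
  lam * (gaussianPDFReal 0 1 (normalTailArg c χ x) / normalTailArg c χ x)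

section

variable {c χ : ℝ}

lemma normalTailArg_pos (hχ : 0 < χ) {x : ℝ} (hx : 0 < x) : 0 < normalTailArg c χ x := by
  have := div_pos hx hχ
  unfold normalTailArg
  positivity

lemma tendsto_normalTailArg_atTop (hc : 0 < c) (hχ : 0 < χ) :
    Tendsto (normalTailArg c χ) atTop atTop :=
  ((tendsto_rpow_atTop (by positivity)).comp (tendsto_id.atTop_div_const hχ)).const_mul_atTop
    (by positivity)

lemma normalTailArg_mul (hχ : 0 ≤ χ) {β x : ℝ} (hβ : 0 ≤ β) (hx : 0 ≤ x) :
    normalTailArg c χ (β * x) = β ^ (c / 2) * normalTailArg c χ x := by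
  rw [normalTailArg, normalTailArg, mul_div_assoc, mul_rpow hβ (div_nonneg hx hχ)]
  ring

lemma normalTailArg_sq_div_two (hχ : 0 ≤ χ) {x : ℝ} (hx : 0 ≤ x) :
    normalTailArg c χ x ^ 2 / 2 = (x / χ) ^ c := by
  rw [normalTailArg, mul_pow, sq_sqrt zero_le_two, ← rpow_natCast, ← rpow_mul (div_nonneg hx hχ)]
  norm_num

lemma millsTail_pos {lam : ℝ} (hlam : 0 < lam) (hχ : 0 < χ) {x : ℝ} (hx : 0 < x) :
    0 < millsTail lam c χ x := by
  have := normalTailArg_pos (c := c) hχ hx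
  have := gaussianPDFReal_pos 0 1 (normalTailArg c χ x) one_ne_zero
  unfold millsTail
  positivity

lemma log_millsTail_sub_log_millsTail_mul {lam β x : ℝ} (hlam : lam ≠ 0) (hχ : 0 < χ) (hβ : 0 < β)
    (hx : 0 < x) :
    log (millsTail lam c χ x) - log (millsTail lam c χ (β * x)) =
      (β ^ c - 1) * (x / χ) ^ c + c / 2 * log β := by
  have hu := normalTailArg_pos (c := c) hχ hx
  have huβ := normalTailArg_pos (c := c) hχ (mul_pos hβ hx)
  have hsq := normalTailArg_sq_div_two (c := c) hχ.le hx.le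
  have hβsq : (β ^ (c / 2)) ^ 2 = β ^ c := by
    rw [← rpow_natCast, ← rpow_mul hβ.le]
    norm_num
  have hφ := gaussianPDFReal_pos 0 1 (normalTailArg c χ x) one_ne_zero
  have hφβ := gaussianPDFReal_pos 0 1 (normalTailArg c χ (β * x)) one_ne_zero
  rw [millsTail, millsTail, log_mul hlam (by positivity), log_mul hlam (by positivity),
    log_gaussianPDFReal_div_self hu, log_gaussianPDFReal_div_self huβ,
    normalTailArg_mul hχ.le hβ.le hx.le, log_mul (by positivity) hu.ne', log_rpow hβ, mul_pow,
    hβsq]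
  linear_combination (β ^ c - 1) * hsq

end

/-- If the loss tail of a portfolio satisfies
`P(S < -x) ∼ λ₋ (1 - Φ(√2 (x/χ̂)^{c/2}))` as `x → ∞`, then for `β > 1` the recurrence
times `T = 1/P(S < -β·VaR*)` and `T₀ = 1/P(S < -VaR*)` satisfy
`ln(T/T₀) = (β^c - 1)(VaR*/χ̂)^c + O(ln β)` as `VaR* → ∞`. -/
theorem stmt_17 (P : ℝ → ℝ) (c χ lam β : ℝ)
    (hc : 0 < c) (hχ : 0 < χ) (hlam : 0 < lam) (hβ : 1 < β)
    (hP : Tendsto (fun x => P x / (lam * (1 - stdNormalCdf (Real.sqrt 2 * (x/χ) ^ (c/2)))))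
      atTop (nhds 1)) :
    ∃ K > 0, ∀ᶠ x in atTop,
      |Real.log (P x / P (β * x)) - (β ^ c - 1) * (x/χ) ^ c| ≤ K * Real.log β := by
  have hβ0 : 0 < β := by linarith
  have hβx : Tendsto (β * ·) atTop atTop := tendsto_id.const_mul_atTop hβ0
  have hM : ∀ᶠ x in atTop, 0 < millsTail lam c χ x :=
    (eventually_gt_atTop 0).mono fun x hx => millsTail_pos hlam hχ hx
  have hPM : P ~[atTop] millsTail lam c χ :=
    (isEquivalent_of_tendsto_one hP).trans (IsEquivalent.refl.mul
      (isEquivalent_one_sub_stdNormalCdf.comp_tendsto (tendsto_normalTailArg_atTop hc hχ)))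
  have hPpos := hPM.eventually_pos hM
  have hlog := hPM.tendsto_log_sub_log (hM.mono fun _ h => h.ne')
  have hE : Tendsto (fun x => log (P x / P (β * x)) - (β ^ c - 1) * (x / χ) ^ c) atTop
      (𝓝 (c / 2 * log β)) := by
    have h := (hlog.sub (hlog.comp hβx)).add_const (c / 2 * log β)
    rw [sub_zero, zero_add] at h
    refine h.congr' ?_
    filter_upwards [hPpos, hβx.eventually hPpos, eventually_gt_atTop 0] with x hPx hPβx hx
    rw [Function.comp_apply, log_div hPx.ne' hPβx.ne']
    linear_combination -log_millsTail_sub_log_millsTail_mul hlam.ne' hχ hβ0 hx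
  have hlt : |c / 2 * log β| < c * log β := by
    rw [abs_of_pos (by have := log_pos hβ; positivity)]
    nlinarith [log_pos hβ]
  refine ⟨c, hc, ?_⟩
  filter_upwards [hE.abs.eventually_lt_const hlt] with x hx
  exact hx.le
end

section
/- Let M̃ be the positive-definite matrix M̃_{kl} = c(c/2−1)(wₖ/σₖ)δ_{kl} + (c²/2)(V^{-1})_{kl} σₖ^{c/2−1} σₗ^{c/2−1}, where c > 1, V is positive definite, wₖ > 0, and the σₖ > 0 satisfy Σⱼ (V^{-1})_{jk} σⱼ^{c/2} σₖ^{c/2−1} = wₖ for all k. Then w^T M̃^{-1} w = (1/(c(c−1))) Σⱼ wⱼσⱼ. -/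
open Finset Matrix

/-!
The vector `σ` is, up to the factor `c(c-1)`, a preimage of `w` under `M̃`: in `(M̃ σ)ₖ` the
diagonal term contributes `c(c/2-1) wₖ` and the second term contributes
`(c²/2) σₖ^{c/2-1} ∑ₗ (V⁻¹)ₖₗ σₗ^{c/2} = (c²/2) wₖ` by the defining equation of `σ`.
Hence `M̃⁻¹ w = σ / (c(c-1))` and `wᵀ M̃⁻¹ w = (∑ⱼ wⱼσⱼ) / (c(c-1))`.
-/

variable {ι : Type*} [Fintype ι] [DecidableEq ι]

/-- The matrix `M̃` of the statement, with `W` in place of `V⁻¹`. -/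
noncomputable def weibullHessian (W : Matrix ι ι ℝ) (c : ℝ) (w σ : ι → ℝ) : Matrix ι ι ℝ :=
  Matrix.of fun k l =>
    (if k = l then c * (c/2 - 1) * (w k / σ k) else 0)
      + c ^ 2 / 2 * W k l * σ k ^ (c/2 - 1) * σ l ^ (c/2 - 1)

theorem weibullHessian_mulVec_self {W : Matrix ι ι ℝ} (hW : W.IsSymm) (c : ℝ) {w σ : ι → ℝ}
    (hσ : ∀ k, 0 < σ k)
    (hdef : ∀ k, ∑ j, W j k * σ j ^ (c/2) * σ k ^ (c/2 - 1) = w k) :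
    weibullHessian W c w σ *ᵥ σ = (c * (c - 1)) • w := by
  funext k
  have hσk : σ k ≠ 0 := (hσ k).ne'
  have hoff : ∀ l, c ^ 2 / 2 * W k l * σ k ^ (c/2 - 1) * σ l ^ (c/2 - 1) * σ l
      = c ^ 2 / 2 * (W l k * σ l ^ (c/2) * σ k ^ (c/2 - 1)) := fun l => by
    have hσl : σ l ≠ 0 := (hσ l).ne'
    rw [Real.rpow_sub_one hσl, hW.apply]
    field_simp
  simp only [weibullHessian, mulVec, dotProduct, of_apply, add_mul, sum_add_distrib, ite_mul,
    zero_mul, sum_ite_eq, mem_univ, if_true, hoff, ← mul_sum, hdef k, Pi.smul_apply, smul_eq_mul]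
  field_simp
  ring

theorem stmt_19_general (N : ℕ) (V : Matrix (Fin N) (Fin N) ℝ) (hV : V.PosDef)
    (c : ℝ) (hc : 1 < c) (w σ : Fin N → ℝ) (hσ : ∀ k, 0 < σ k)
    (hdef : ∀ k, ∑ j, V⁻¹ j k * σ j ^ (c/2) * σ k ^ (c/2 - 1) = w k)
    (M : Matrix (Fin N) (Fin N) ℝ)
    (hM : M = Matrix.of fun k l =>
      (if k = l then c * (c/2 - 1) * (w k / σ k) else 0)
        + c ^ 2 / 2 * V⁻¹ k l * σ k ^ (c/2 - 1) * σ l ^ (c/2 - 1))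
    (hMpd : M.PosDef) :
    w ⬝ᵥ (M⁻¹ *ᵥ w) = (1/(c * (c - 1))) * ∑ j, w j * σ j := by
  have hsymm : V⁻¹.IsSymm := (isHermitian_iff_isSymm.mp hV.isHermitian).inv
  have hcc : c * (c - 1) ≠ 0 := by nlinarith
  have hMσ : M *ᵥ σ = (c * (c - 1)) • w := hM ▸ weibullHessian_mulVec_self hsymm c hσ hdef
  let := hMpd.isUnit.invertible
  have hMw : M⁻¹ *ᵥ w = (c * (c - 1))⁻¹ • σ :=
    inv_mulVec_eq_vec <| by rw [mulVec_smul, hMσ, inv_smul_smul₀ hcc]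
  rw [hMw, dotProduct_smul, smul_eq_mul, one_div, dotProduct]

/-- Quadratic-form identity for the Hessian matrix `M̃` arising in the Laplace expansion:
if `M̃_{kl} = c(c/2-1)(wₖ/σₖ)δ_{kl} + (c²/2)(V⁻¹)_{kl} σₖ^{c/2-1} σₗ^{c/2-1}` is positive
definite and the positive `σₖ` satisfy `∑ⱼ (V⁻¹)_{jk} σⱼ^{c/2} σₖ^{c/2-1} = wₖ`,
then `wᵀ M̃⁻¹ w = (1/(c(c-1))) ∑ⱼ wⱼσⱼ`. -/
theorem stmt_19 (N : ℕ) (V : Matrix (Fin N) (Fin N) ℝ) (hV : V.PosDef)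
    (c : ℝ) (hc : 1 < c) (w σ : Fin N → ℝ) (hw : ∀ k, 0 < w k) (hσ : ∀ k, 0 < σ k)
    (hdef : ∀ k, ∑ j, V⁻¹ j k * σ j ^ (c/2) * σ k ^ (c/2 - 1) = w k)
    (M : Matrix (Fin N) (Fin N) ℝ)
    (hM : M = Matrix.of fun k l =>
      (if k = l then c * (c/2 - 1) * (w k / σ k) else 0)
        + c ^ 2 / 2 * V⁻¹ k l * σ k ^ (c/2 - 1) * σ l ^ (c/2 - 1))
    (hMpd : M.PosDef) :
    w ⬝ᵥ (M⁻¹ *ᵥ w) = (1/(c * (c - 1))) * ∑ j, w j * σ j :=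
  stmt_19_general N V hV c hc w σ hσ hdef M hM hMpd
end
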